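/- Let X, Y, A, B, C, D, E, F be n×n complex matrices with X² A + Y² B + X Y C + X D + Y E + F = 0 and suppose Xᵀ and Yᵀ have a common eigenvector for every eigenvalue of X (i.e., for each eigenvalue α of X there exist μ ∈ ℂ and a nonzero row vector g with g X = α g and g Y = μ g). Then every eigenvalue α of X appears as the first coordinate of a zero (α, μ) of the bivariate polynomial p(α, μ) = det(α² A + μ² B + α μ C + α D + μ E + F). -/

import Mathlib

/-! Multiplying the matrix equation on the left by a common left eigenvector `g` of `X` and `Y`
replaces `X` and `Y` by their eigenvalues `α` and `μ`, so `g` is a nonzero vector in the left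
kernel of the pencil at `(α, μ)` and its determinant vanishes. -/

open Matrix

theorem Matrix.vecMul_mul_of_vecMul_eq_smul {m n R : Type*} [Fintype m] [Semiring R]
    {g : m → R} {X : Matrix m m R} {a : R} (hX : g ᵥ* X = a • g) (M : Matrix m n R) :
    g ᵥ* (X * M) = a • (g ᵥ* M) := by
  rw [← vecMul_vecMul, hX, smul_vecMul]

theorem Matrix.vecMul_quadratic_of_common_left_eigenvector {m R : Type*} [Fintype m]
    [DecidableEq m] [CommSemiring R] {g : m → R} {X Y : Matrix m m R} {α μ : R}
    (hX : g ᵥ* X = α • g) (hY : g ᵥ* Y = μ • g) (A B C D E F : Matrix m m R) :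
    g ᵥ* (X ^ 2 * A + Y ^ 2 * B + X * Y * C + X * D + Y * E + F) =
      g ᵥ* (α ^ 2 • A + μ ^ 2 • B + (α * μ) • C + α • D + μ • E + F) := by
  simp only [sq, mul_assoc, vecMul_add, vecMul_smul, vecMul_mul_of_vecMul_eq_smul hX,
    vecMul_mul_of_vecMul_eq_smul hY, smul_smul]

theorem stmt_15 {n : ℕ} (X Y A B C D E F : Matrix (Fin n) (Fin n) ℂ)
    (h : X ^ 2 * A + Y ^ 2 * B + X * Y * C + X * D + Y * E + F = 0)
    (hcommon : ∀ α : ℂ, (∃ v : Fin n → ℂ, v ≠ 0 ∧ X.mulVec v = α • v) →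
      ∃ μ : ℂ, ∃ g : Fin n → ℂ, g ≠ 0 ∧
        Matrix.vecMul g X = α • g ∧ Matrix.vecMul g Y = μ • g) :
    ∀ α : ℂ, (∃ v : Fin n → ℂ, v ≠ 0 ∧ X.mulVec v = α • v) →
      ∃ μ : ℂ, (α ^ 2 • A + μ ^ 2 • B + (α * μ) • C + α • D + μ • E + F).det = 0 := by
  intro α hα
  obtain ⟨μ, g, hg, hgX, hgY⟩ := hcommon α hα
  refine ⟨μ, exists_vecMul_eq_zero_iff.mp ⟨g, hg, ?_⟩⟩
  rw [← vecMul_quadratic_of_common_left_eigenvector hgX hgY, h, vecMul_zero]
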